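/- arXiv:2103.14922 — 2 statements merged into one kernel-verified Lean document; each statement's English description precedes it below -/
import Mathlib

section
/- Let λ, μ ∈ ℝ with μ > 0, 3λ + 2μ > 0 (so λ + μ > 0). Fix β ∈ ℂ with β ≠ 0, γ ∈ {1,−1}, ε ∈ {1,−1} with Re(εβ) > 0. Define functions w₁(y) = (1, γεi)ᵀ e^{−εβy} and w₂(y) = [y(1, γεi)ᵀ + (ε(λ+3μ)/(β(λ+μ)), 0)ᵀ] e^{−εβy} on (0,∞). Then w₁ and w₂ both satisfy the ODE system L₀(−γD_y, β)w = 0, where D_y = −i d/dy and L₀(ξ,β) = Aξ² + βBξ + β²C with A = diag(λ+2μ, μ), B = [[0, λ+μ],[λ+μ, 0]], C = diag(μ, λ+2μ). -/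
/-!
Both fields have the form `e^{cy} (y v + u)` with `c = -εβ`. Substituting such a field into
`-A w'' + a B w' + b C w` (here `a = iγβ`, `b = β²`) gives `e^{cy} (y P(c) v + P(c) u + P'(c) v)`
with `P(c) = -c² A + a c B + b C`. Since `ε² = γ² = 1`, one finds
`P(-εβ) = β² (λ + μ) [[-1, -iγε], [-iγε, 1]]`, which kills `v = (1, iγε)`, and `u = (κ, 0)` solves
`P(c) u = -P'(c) v` because `κ β (λ + μ) = ε (λ + 3μ)`.
-/

open Complex Matrix

noncomputable def expAffine {E : Type*} [AddCommGroup E] [Module ℂ E] (c : ℂ) (v u : E) (y : ℝ) :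
    E :=
  exp (c * y) • ((y : ℂ) • v + u)

section expAffine

variable {E : Type*} [NormedAddCommGroup E] [NormedSpace ℂ E]

theorem hasDerivAt_expAffine (c : ℂ) (v u : E) (y : ℝ) :
    HasDerivAt (expAffine c v u) (expAffine c (c • v) (v + c • u) y) y := by
  have hexp : HasDerivAt (fun t : ℝ => exp (c * t)) (exp (c * y) * c) y := by
    simpa using ((ofRealCLM.hasDerivAt (x := y)).const_mul c).cexp
  have haff : HasDerivAt (fun t : ℝ => (t : ℂ) • v + u) v y := by
    simpa using (ofRealCLM.hasDerivAt (x := y)).smul_const v |>.add_const u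
  refine (hexp.smul haff).congr_deriv ?_
  simp only [expAffine]
  module

theorem deriv_expAffine (c : ℂ) (v u : E) :
    deriv (expAffine c v u) = expAffine c (c • v) (v + c • u) :=
  funext fun y => (hasDerivAt_expAffine c v u y).deriv

theorem expAffine_solves_secondOrder {F : Type*} [AddCommGroup F] [Module ℂ F]
    (A B C : E →ₗ[ℂ] F) (a b c : ℂ) (v u : E)
    (hv : -(c ^ 2 • A v) + (a * c) • B v + b • C v = 0)
    (hu : -(c ^ 2 • A u) + (a * c) • B u + b • C u + (-((2 * c) • A v) + a • B v) = 0) (y : ℝ) :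
    -A (deriv (deriv (expAffine c v u)) y) + a • B (deriv (expAffine c v u) y)
      + b • C (expAffine c v u y) = 0 := by
  simp only [deriv_expAffine, expAffine, map_add, map_smul]
  linear_combination (norm := module) (exp (c * y) * y) • hv + exp (c * y) • hu

end expAffine

theorem lamb_stable_solutions_ODE_general (lam mu : ℝ) (hmu : mu > 0) (hlam : 3 * lam + 2 * mu > 0)
    (β : ℂ) (hβ : β ≠ 0) (γ ε : ℂ) (hγ : γ = 1 ∨ γ = -1) (hε : ε = 1 ∨ ε = -1) :
    let A : Matrix (Fin 2) (Fin 2) ℂ := !![(lam + 2 * mu : ℂ), 0; 0, (mu : ℂ)]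
    let B : Matrix (Fin 2) (Fin 2) ℂ := !![0, (lam + mu : ℂ); (lam + mu : ℂ), 0]
    let C : Matrix (Fin 2) (Fin 2) ℂ := !![(mu : ℂ), 0; 0, (lam + 2 * mu : ℂ)]
    let w₁ : ℝ → (Fin 2 → ℂ) := fun y => Complex.exp (-(ε * β) * y) • ![1, γ * ε * Complex.I]
    let w₂ : ℝ → (Fin 2 → ℂ) := fun y => Complex.exp (-(ε * β) * y) •
      ((y : ℂ) • ![1, γ * ε * Complex.I] + ![ε * (lam + 3 * mu) / (β * (lam + mu)), 0])
    ∀ y ∈ Set.Ioi (0 : ℝ),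
      (-(A.mulVec (deriv (deriv w₁) y)) + (Complex.I * γ * β) • B.mulVec (deriv w₁ y)
          + β ^ 2 • C.mulVec (w₁ y) = 0) ∧
      (-(A.mulVec (deriv (deriv w₂) y)) + (Complex.I * γ * β) • B.mulVec (deriv w₂ y)
          + β ^ 2 • C.mulVec (w₂ y) = 0) := by
  intro A B C w₁ w₂ y _
  have hlm : (lam : ℂ) + mu ≠ 0 := by exact_mod_cast (by linarith : lam + mu ≠ 0)
  have hγ2 : γ ^ 2 = 1 := by rcases hγ with rfl | rfl <;> norm_num
  have hε2 : ε ^ 2 = 1 := by rcases hε with rfl | rfl <;> norm_num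
  have hj : (γ * ε * I) ^ 2 = -1 := by rw [mul_pow, mul_pow, hγ2, hε2, I_sq]; ring
  have hw₁ : w₁ = expAffine (-(ε * β)) 0 ![1, γ * ε * I] := by
    funext t; simp [w₁, expAffine]
  have solves := expAffine_solves_secondOrder A.mulVecLin B.mulVecLin C.mulVecLin
    (I * γ * β) (β ^ 2) (-(ε * β))
  simp only [mulVecLin_apply] at solves
  have hker : -((-(ε * β)) ^ 2 • A *ᵥ ![1, γ * ε * I])
      + (I * γ * β * -(ε * β)) • B *ᵥ ![1, γ * ε * I] + β ^ 2 • C *ᵥ ![1, γ * ε * I] = 0 := by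
    ext i; fin_cases i <;>
      simp only [A, B, C, mulVec, vec2_dotProduct, of_apply,
        Pi.add_apply, Pi.neg_apply, Pi.smul_apply, Pi.zero_apply, smul_eq_mul, Fin.zero_eta, Fin.mk_one,
        cons_val_zero, cons_val_one, cons_val_fin_one]
    · linear_combination (-β ^ 2 * (lam + 2 * mu)) * hε2 - β ^ 2 * (lam + mu) * hj
    · linear_combination (-γ * ε * I * β ^ 2 * mu) * hε2
  refine ⟨hw₁ ▸ solves _ _ (by simp) (by simpa using hker) y, solves _ _ hker ?_ y⟩
  set κ := ε * (lam + 3 * mu) / (β * (lam + mu))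
  have hκ : κ * (β * (lam + mu)) = ε * (lam + 3 * mu) := div_mul_cancel₀ _ (mul_ne_zero hβ hlm)
  ext i; fin_cases i <;>
    simp only [A, B, C, mulVec, vec2_dotProduct, of_apply,
      Pi.add_apply, Pi.neg_apply, Pi.smul_apply, Pi.zero_apply, smul_eq_mul, Fin.zero_eta, Fin.mk_one,
      cons_val_zero, cons_val_one, cons_val_fin_one]
  · linear_combination (-β ^ 2 * κ * (lam + 2 * mu)) * hε2 + γ ^ 2 * ε * β * (lam + mu) * I_sq
      - ε * β * (lam + mu) * hγ2 - β * hκ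
  · linear_combination (-I * γ * ε * β) * hκ - I * γ * β * (lam + mu) * hε2

theorem lamb_stable_solutions_ODE (lam mu : ℝ) (hmu : mu > 0) (hlam : 3 * lam + 2 * mu > 0)
    (β : ℂ) (hβ : β ≠ 0) (γ ε : ℂ) (hγ : γ = 1 ∨ γ = -1) (hε : ε = 1 ∨ ε = -1)
    (hre : 0 < (ε * β).re) :
    let A : Matrix (Fin 2) (Fin 2) ℂ := !![(lam + 2 * mu : ℂ), 0; 0, (mu : ℂ)]
    let B : Matrix (Fin 2) (Fin 2) ℂ := !![0, (lam + mu : ℂ); (lam + mu : ℂ), 0]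
    let C : Matrix (Fin 2) (Fin 2) ℂ := !![(mu : ℂ), 0; 0, (lam + 2 * mu : ℂ)]
    let w₁ : ℝ → (Fin 2 → ℂ) := fun y => Complex.exp (-(ε * β) * y) • ![1, γ * ε * Complex.I]
    let w₂ : ℝ → (Fin 2 → ℂ) := fun y => Complex.exp (-(ε * β) * y) •
      ((y : ℂ) • ![1, γ * ε * Complex.I] + ![ε * (lam + 3 * mu) / (β * (lam + mu)), 0])
    ∀ y ∈ Set.Ioi (0 : ℝ),
      (-(A.mulVec (deriv (deriv w₁) y)) + (Complex.I * γ * β) • B.mulVec (deriv w₁ y)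
          + β ^ 2 • C.mulVec (w₁ y) = 0) ∧
      (-(A.mulVec (deriv (deriv w₂) y)) + (Complex.I * γ * β) • B.mulVec (deriv w₂ y)
          + β ^ 2 • C.mulVec (w₂ y) = 0) :=
  lamb_stable_solutions_ODE_general lam mu hmu hlam β hβ γ ε hγ hε
end

section
/- Let λ, μ ∈ ℝ with μ > 0 and 3λ+2μ > 0, ρ > 0, ω > 0, h > 0, and let a_L, b_L, c_L be the Lamb sesquilinear forms on H¹((−h,h), ℂ²). Suppose there exist C > 0, β₀ > 0 such that for all real a with |a| ≥ β₀ and all v: a_L(v,v) + a b_L(v,v) + a² c_L(v,v) ≥ C(|v|²₁ + a²‖v‖²₀). Then there exist α ∈ (0,1) and C' > 0 such that for all complex β = a + ib with |a| ≥ β₀ and |b| ≤ α|a|, and all v ∈ H¹((−h,h), ℂ²): Re{a_L(v,v) + β b_L(v,v) + β² c_L(v,v)} ≥ C'‖v‖²_{H¹}. -/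
open Complex MeasureTheory intervalIntegral

noncomputable def lambAL (lam mu rho omga h : ℝ) (v₁ v₃ : ℝ → ℂ) : ℂ :=
  ∫ x in (-h)..h,
    (lam + 2 * mu : ℂ) * deriv v₁ x * (starRingEnd ℂ) (deriv v₁ x)
    + (mu : ℂ) * deriv v₃ x * (starRingEnd ℂ) (deriv v₃ x)
    - (omga ^ 2 * rho : ℂ) * (v₁ x * (starRingEnd ℂ) (v₁ x) + v₃ x * (starRingEnd ℂ) (v₃ x))

noncomputable def lambBL (lam mu h : ℝ) (v₁ v₃ : ℝ → ℂ) : ℂ :=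
  ∫ x in (-h)..h,
    (lam : ℂ) * (-Complex.I * deriv v₁ x * (starRingEnd ℂ) (v₃ x)
      + Complex.I * v₃ x * (starRingEnd ℂ) (deriv v₁ x))
    + (mu : ℂ) * (-Complex.I * deriv v₃ x * (starRingEnd ℂ) (v₁ x)
      + Complex.I * v₁ x * (starRingEnd ℂ) (deriv v₃ x))

noncomputable def lambCL (lam mu h : ℝ) (v₁ v₃ : ℝ → ℂ) : ℂ :=
  ∫ x in (-h)..h,
    (lam + 2 * mu : ℂ) * v₃ x * (starRingEnd ℂ) (v₃ x)
    + (mu : ℂ) * v₁ x * (starRingEnd ℂ) (v₁ x)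

noncomputable def lambSemSq (h : ℝ) (v₁ v₃ : ℝ → ℂ) : ℝ :=
  ∫ x in (-h)..h, ‖deriv v₁ x‖ ^ 2 + ‖deriv v₃ x‖ ^ 2

noncomputable def lambL2Sq (h : ℝ) (v₁ v₃ : ℝ → ℂ) : ℝ :=
  ∫ x in (-h)..h, ‖v₁ x‖ ^ 2 + ‖v₃ x‖ ^ 2

/-- H¹-type regularity/integrability hypotheses standing in for `v ∈ H¹((−h,h), ℂ²)`. -/
def lambH1 (h : ℝ) (v₁ v₃ : ℝ → ℂ) : Prop :=
  Differentiable ℝ v₁ ∧ Differentiable ℝ v₃ ∧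
  IntervalIntegrable (fun x => ‖v₁ x‖ ^ 2 + ‖v₃ x‖ ^ 2) volume (-h) h ∧
  IntervalIntegrable (fun x => ‖deriv v₁ x‖ ^ 2 + ‖deriv v₃ x‖ ^ 2) volume (-h) h

/-!
Since `b_L(v,v)` and `c_L(v,v)` are real, for `β = a + ib` the real part of the quadratic form
equals its value at the real point `a` minus `b² c_L(v,v)`. The first part is at least
`C (|v|₁² + a² ‖v‖₀²)` by hypothesis, while `b² c_L(v,v) ≤ α² a² (|λ + 2μ| + |μ|) ‖v‖₀²`, which a
small `α` makes at most `C a² ‖v‖₀² / 2`. What remains dominates `min C (C β₀² / 2) ‖v‖²_{H¹}`.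
-/

open scoped ComplexConjugate

theorem im_intervalIntegral_eq_zero_of_conj_eq {f : ℝ → ℂ} {a b : ℝ}
    (hf : ∀ x, conj (f x) = f x) : (∫ x in a..b, f x).im = 0 := by
  rw [← conj_eq_iff_im, ← intervalIntegral.intervalIntegral_conj]
  simp only [hf]

theorem re_add_mul_add_sq_mul_of_im_eq_zero {A B Q : ℂ} (hB : B.im = 0) (hQ : Q.im = 0)
    (β : ℂ) :
    (A + β * B + β ^ 2 * Q).re
      = (A + (β.re : ℂ) * B + (β.re : ℂ) ^ 2 * Q).re - β.im ^ 2 * Q.re := by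
  simp only [sq, add_re, mul_re, mul_im, ofReal_re, ofReal_im, hB, hQ]
  ring

theorem exists_pos_lt_one_sq_mul_le {M ε : ℝ} (hM : 0 ≤ M) (hε : 0 < ε) :
    ∃ α : ℝ, 0 < α ∧ α < 1 ∧ α ^ 2 * M ≤ ε := by
  have hα₂ : ε / (2 * (M + ε)) ≤ 1 / 2 := by
    rw [div_le_iff₀ (by positivity)]; linarith
  refine ⟨ε / (2 * (M + ε)), by positivity, by linarith, ?_⟩
  calc (ε / (2 * (M + ε))) ^ 2 * M
      ≤ ε / (2 * (M + ε)) * M := by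
        gcongr; exact pow_le_of_le_one (by positivity) (by linarith) two_ne_zero
    _ ≤ ε := by
        rw [div_mul_eq_mul_div, div_le_iff₀ (by positivity)]; nlinarith

section LambForms

variable (lam mu h : ℝ) (v₁ v₃ : ℝ → ℂ)

theorem lambBL_im : (lambBL lam mu h v₁ v₃).im = 0 :=
  im_intervalIntegral_eq_zero_of_conj_eq fun x => by
    simp only [map_add, map_mul, map_neg, conj_conj, conj_ofReal, conj_I]
    ring

theorem lambCL_im : (lambCL lam mu h v₁ v₃).im = 0 :=
  im_intervalIntegral_eq_zero_of_conj_eq fun x => by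
    simp only [map_add, map_mul, conj_conj, conj_ofReal, map_ofNat]
    ring

variable {h}

theorem lambSemSq_nonneg (hh : 0 ≤ h) : 0 ≤ lambSemSq h v₁ v₃ :=
  intervalIntegral.integral_nonneg (by linarith) fun _ _ => by positivity

theorem lambL2Sq_nonneg (hh : 0 ≤ h) : 0 ≤ lambL2Sq h v₁ v₃ :=
  intervalIntegral.integral_nonneg (by linarith) fun _ _ => by positivity

variable {v₁ v₃}

theorem lambCL_re_eq (hv₁ : Continuous v₁) (hv₃ : Continuous v₃) :
    (lambCL lam mu h v₁ v₃).re
      = ∫ x in (-h)..h, (lam + 2 * mu) * ‖v₃ x‖ ^ 2 + mu * ‖v₁ x‖ ^ 2 := by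
  have hint : IntervalIntegrable (fun x => (lam + 2 * mu : ℂ) * v₃ x * conj (v₃ x)
      + (mu : ℂ) * v₁ x * conj (v₁ x)) volume (-h) h := by
    apply Continuous.intervalIntegrable
    fun_prop
  rw [lambCL, ← reCLM_apply, ← reCLM.intervalIntegral_comp_comm hint]
  congr 1
  funext x
  simp [mul_assoc, mul_conj, normSq_eq_norm_sq, -ofReal_pow]

theorem lambCL_re_le (hh : 0 ≤ h) (hv₁ : Continuous v₁) (hv₃ : Continuous v₃) :
    (lambCL lam mu h v₁ v₃).re ≤ (|lam + 2 * mu| + |mu|) * lambL2Sq h v₁ v₃ := by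
  rw [lambCL_re_eq lam mu hv₁ hv₃, lambL2Sq, ← intervalIntegral.integral_const_mul]
  refine intervalIntegral.integral_mono_on (by linarith)
    (Continuous.intervalIntegrable (by fun_prop) _ _)
    (Continuous.intervalIntegrable (by fun_prop) _ _) fun x _ => ?_
  have h₃ := mul_le_mul_of_nonneg_right (le_abs_self (lam + 2 * mu)) (sq_nonneg ‖v₃ x‖)
  have h₁ := mul_le_mul_of_nonneg_right (le_abs_self mu) (sq_nonneg ‖v₁ x‖)
  linarith [mul_nonneg (abs_nonneg (lam + 2 * mu)) (sq_nonneg ‖v₁ x‖),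
    mul_nonneg (abs_nonneg mu) (sq_nonneg ‖v₃ x‖)]

end LambForms

theorem lamb_coercivity_complex_beta_general (lam mu rho omga h : ℝ)
    (hh : h > 0) (C β₀ : ℝ) (hC : C > 0) (hβ₀ : β₀ > 0)
    (hcoer : ∀ a : ℝ, β₀ ≤ |a| → ∀ v₁ v₃ : ℝ → ℂ, lambH1 h v₁ v₃ →
      (lambAL lam mu rho omga h v₁ v₃ + (a : ℂ) * lambBL lam mu h v₁ v₃
        + (a : ℂ) ^ 2 * lambCL lam mu h v₁ v₃).re
        ≥ C * (lambSemSq h v₁ v₃ + a ^ 2 * lambL2Sq h v₁ v₃)) :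
    ∃ α : ℝ, 0 < α ∧ α < 1 ∧ ∃ C' > (0 : ℝ), ∀ β : ℂ,
      β₀ ≤ |β.re| → |β.im| ≤ α * |β.re| →
      ∀ v₁ v₃ : ℝ → ℂ, lambH1 h v₁ v₃ →
      (lambAL lam mu rho omga h v₁ v₃ + β * lambBL lam mu h v₁ v₃
        + β ^ 2 * lambCL lam mu h v₁ v₃).re
        ≥ C' * (lambSemSq h v₁ v₃ + lambL2Sq h v₁ v₃) := by
  obtain ⟨α, hα, hα₁, hαM⟩ :=
    exists_pos_lt_one_sq_mul_le (by positivity : 0 ≤ |lam + 2 * mu| + |mu|) (half_pos hC)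
  refine ⟨α, hα, hα₁, min C (C * β₀ ^ 2 / 2), by positivity, fun β hre him v₁ v₃ hv => ?_⟩
  rw [re_add_mul_add_sq_mul_of_im_eq_zero (lambBL_im lam mu h v₁ v₃) (lambCL_im lam mu h v₁ v₃)]
  have hcoer_re := hcoer β.re hre v₁ v₃ hv
  have hQ := lambCL_re_le lam mu hh.le hv.1.continuous hv.2.1.continuous
  have hS := lambSemSq_nonneg v₁ v₃ hh.le
  have hL := lambL2Sq_nonneg v₁ v₃ hh.le
  set L := lambL2Sq h v₁ v₃
  set M := |lam + 2 * mu| + |mu|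
  have hre₂ : β₀ ^ 2 ≤ β.re ^ 2 := by simpa only [sq_abs] using pow_le_pow_left₀ hβ₀.le hre 2
  have him₂ : β.im ^ 2 ≤ α ^ 2 * β.re ^ 2 := by
    rw [← sq_abs β.im, ← sq_abs β.re, ← mul_pow]; gcongr
  have hpert : β.im ^ 2 * (lambCL lam mu h v₁ v₃).re ≤ C / 2 * β.re ^ 2 * L :=
    calc β.im ^ 2 * (lambCL lam mu h v₁ v₃).re ≤ β.im ^ 2 * (M * L) := by gcongr
      _ ≤ α ^ 2 * β.re ^ 2 * (M * L) := by gcongr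
      _ ≤ C / 2 * β.re ^ 2 * L := by
          linarith [mul_le_mul_of_nonneg_right hαM (mul_nonneg (sq_nonneg β.re) hL)]
  have hC' : min C (C * β₀ ^ 2 / 2) * (lambSemSq h v₁ v₃ + L)
      ≤ C * lambSemSq h v₁ v₃ + C / 2 * β.re ^ 2 * L := by
    linarith [mul_le_mul_of_nonneg_right (min_le_left C (C * β₀ ^ 2 / 2)) hS,
      mul_le_mul_of_nonneg_right (min_le_right C (C * β₀ ^ 2 / 2)) hL,
      mul_le_mul_of_nonneg_left (mul_le_mul_of_nonneg_right hre₂ hL) (half_pos hC).le]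
  linarith

theorem lamb_coercivity_complex_beta (lam mu rho omga h : ℝ)
    (hmu : mu > 0) (hlam : 3 * lam + 2 * mu > 0) (hrho : rho > 0) (homga : omga > 0)
    (hh : h > 0) (C β₀ : ℝ) (hC : C > 0) (hβ₀ : β₀ > 0)
    (hcoer : ∀ a : ℝ, β₀ ≤ |a| → ∀ v₁ v₃ : ℝ → ℂ, lambH1 h v₁ v₃ →
      (lambAL lam mu rho omga h v₁ v₃ + (a : ℂ) * lambBL lam mu h v₁ v₃
        + (a : ℂ) ^ 2 * lambCL lam mu h v₁ v₃).re
        ≥ C * (lambSemSq h v₁ v₃ + a ^ 2 * lambL2Sq h v₁ v₃)) :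
    ∃ α : ℝ, 0 < α ∧ α < 1 ∧ ∃ C' > (0 : ℝ), ∀ β : ℂ,
      β₀ ≤ |β.re| → |β.im| ≤ α * |β.re| →
      ∀ v₁ v₃ : ℝ → ℂ, lambH1 h v₁ v₃ →
      (lambAL lam mu rho omga h v₁ v₃ + β * lambBL lam mu h v₁ v₃
        + β ^ 2 * lambCL lam mu h v₁ v₃).re
        ≥ C' * (lambSemSq h v₁ v₃ + lambL2Sq h v₁ v₃) :=
  lamb_coercivity_complex_beta_general lam mu rho omga h hh C β₀ hC hβ₀ hcoer
end
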